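/- Suppose Λ = F is a finite-dimensional real inner product space with dist(a,b) = ‖a − b‖, Θ is a compact topological space with a finite Borel measure ν, ι : Θ → E and γ : Θ → F are continuous, and λ : Θ → [0,∞) is continuous with ∫_Θ λ dν = 1, and let g̃_ε(x) = (∫_Θ γ(θ) λ(θ) ψ_ε(x − ι(θ)) dν(θ)) / (∫_Θ λ(θ) ψ_ε(x − ι(θ)) dν(θ)). Then the Bayes estimator is essentially unique: if g : E → F is measurable and R_ε(g;λ) = R_ε(g̃_ε;λ) < ∞, then g(x) = g̃_ε(x) for Lebesgue-almost every x ∈ E. -/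

import Mathlib

/-!
For each observation `x`, the posterior weights `w x θ = λ(θ) ψ_ε(x - ι θ)` have positive total
mass `m x`, and `g̃_ε x` is the `w x`-weighted mean of `γ`. The weighted Pythagorean identity
`∫ ‖a - γ‖² w x = ‖a - g̃_ε x‖² m x + ∫ ‖g̃_ε x - γ‖² w x` (the cross term vanishes at the mean)
and Tonelli give `R_ε(g) = ∫ ‖g - g̃_ε‖² m + R_ε(g̃_ε)`. Since `R_ε(g̃_ε)` is finite and equals
`R_ε(g)`, the integral of `‖g - g̃_ε‖² m` vanishes, so `g = g̃_ε` almost everywhere.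
-/

open MeasureTheory Real

/-- The gaussian kernel `ψ_ε(u) = exp(−‖u‖²/(2ε²)) / (2πε²)^{s/2}` on a real inner product
space `E` of dimension `s`. -/
noncomputable def gaussKernel (E : Type*) [NormedAddCommGroup E] [InnerProductSpace ℝ E]
    (ε : ℝ) (u : E) : ℝ :=
  Real.exp (-‖u‖ ^ 2 / (2 * ε ^ 2)) / (2 * Real.pi * ε ^ 2) ^ ((Module.finrank ℝ E : ℝ) / 2)

lemma gaussKernel_continuous (E : Type*) [NormedAddCommGroup E] [InnerProductSpace ℝ E]
    (ε : ℝ) : Continuous (gaussKernel E ε) :=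
  (Real.continuous_exp.comp (by fun_prop)).div_const _

lemma gaussKernel_pos (E : Type*) [NormedAddCommGroup E] [InnerProductSpace ℝ E]
    {ε : ℝ} (hε : ε ≠ 0) (u : E) : 0 < gaussKernel E ε u :=
  div_pos (Real.exp_pos _) (Real.rpow_pos_of_pos (by positivity) _)

lemma Continuous.integrable_of_compactSpace {X G : Type*} [TopologicalSpace X] [CompactSpace X]
    [MeasurableSpace X] [OpensMeasurableSpace X] {μ : Measure X} [IsFiniteMeasure μ]
    [NormedAddCommGroup G] {f : X → G} (hf : Continuous f) : Integrable f μ :=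
  hf.integrable_of_hasCompactSupport (.of_compactSpace f)

section PosteriorWeight

variable {E : Type*} [NormedAddCommGroup E] [InnerProductSpace ℝ E] {Θ : Type*}

/-- The unnormalised posterior density `λ(θ) ψ_ε(x - ι θ)` of `θ` given the observation `x`. -/
noncomputable def posteriorWeight (ι : Θ → E) (l : Θ → ℝ) (ε : ℝ) (x : E) (θ : Θ) : ℝ :=
  l θ * gaussKernel E ε (x - ι θ)

lemma posteriorWeight_nonneg {l : Θ → ℝ} (hl0 : ∀ θ, 0 ≤ l θ) (ι : Θ → E) {ε : ℝ} (hε : ε ≠ 0)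
    (x : E) (θ : Θ) : 0 ≤ posteriorWeight ι l ε x θ :=
  mul_nonneg (hl0 θ) (gaussKernel_pos E hε _).le

variable [TopologicalSpace Θ]

lemma continuous_uncurry_posteriorWeight {ι : Θ → E} (hι : Continuous ι) {l : Θ → ℝ}
    (hl : Continuous l) (ε : ℝ) : Continuous (Function.uncurry (posteriorWeight ι l ε)) :=
  (hl.comp continuous_snd).mul
    ((gaussKernel_continuous E ε).comp (continuous_fst.sub (hι.comp continuous_snd)))

/-- The posterior weights have the same support as the prior, since `ψ_ε > 0`. -/
lemma integral_posteriorWeight_pos [CompactSpace Θ] [MeasurableSpace Θ] [OpensMeasurableSpace Θ]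
    {ν : Measure Θ} [IsFiniteMeasure ν] {ι : Θ → E} (hι : Continuous ι) {l : Θ → ℝ}
    (hl : Continuous l) (hl0 : ∀ θ, 0 ≤ l θ) (hl1 : ∫ θ, l θ ∂ν = 1) {ε : ℝ} (hε : ε ≠ 0)
    (x : E) : 0 < ∫ θ, posteriorWeight ι l ε x θ ∂ν := by
  have hsupport : Function.support (posteriorWeight ι l ε x) = Function.support l := by
    ext θ
    simp [posteriorWeight, (gaussKernel_pos E hε (x - ι θ)).ne']
  rw [integral_pos_iff_support_of_nonneg (posteriorWeight_nonneg hl0 ι hε x)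
      ((continuous_uncurry_posteriorWeight hι hl ε).comp
        (Continuous.prodMk_right x)).integrable_of_compactSpace, hsupport,
    ← integral_pos_iff_support_of_nonneg hl0 hl.integrable_of_compactSpace, hl1]
  exact one_pos

end PosteriorWeight

section WeightedMean

variable {F : Type*} [NormedAddCommGroup F] [InnerProductSpace ℝ F]

lemma norm_sub_sq_mul_eq (a c y : F) (t : ℝ) :
    ‖a - y‖ ^ 2 * t = ‖a - c‖ ^ 2 * t + 2 * inner ℝ (a - c) (t • (c - y)) + ‖c - y‖ ^ 2 * t := by
  rw [show a - y = (a - c) + (c - y) by abel, norm_add_sq_real, real_inner_smul_right]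
  ring

variable {Θ : Type*} [MeasurableSpace Θ] {ν : Measure Θ}
  {w : Θ → ℝ} {γ : Θ → F} {c : F}

variable (hw : Integrable w ν) (hwγ : Integrable (fun θ => w θ • γ θ) ν)
include hw hwγ

lemma integrable_smul_sub_of_integrable_smul (c : F) :
    Integrable (fun θ => w θ • (c - γ θ)) ν :=
  ((hw.smul_const c).sub hwγ).congr (.of_forall fun _ => (smul_sub _ _ _).symm)

lemma integral_smul_sub_eq_zero_of_weighted_mean [CompleteSpace F]
    (hc : (∫ θ, w θ ∂ν) • c = ∫ θ, w θ • γ θ ∂ν) :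
    ∫ θ, w θ • (c - γ θ) ∂ν = 0 := by
  simp_rw [smul_sub]
  rw [integral_sub (hw.smul_const c) hwγ, integral_smul_const, hc, sub_self]

variable (hvar : Integrable (fun θ => ‖c - γ θ‖ ^ 2 * w θ) ν)
include hvar

lemma integrable_norm_sub_sq_mul (a : F) :
    Integrable (fun θ => ‖a - γ θ‖ ^ 2 * w θ) ν := by
  have hcross : Integrable (fun θ => 2 * inner ℝ (a - c) (w θ • (c - γ θ))) ν :=
    ((integrable_smul_sub_of_integrable_smul hw hwγ c).const_inner (a - c)).const_mul 2
  refine ((hw.const_mul (‖a - c‖ ^ 2)).add hcross |>.add hvar).congr (.of_forall fun θ => ?_)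
  exact (norm_sub_sq_mul_eq a c (γ θ) (w θ)).symm

variable [CompleteSpace F]

/-- Weighted Pythagorean (bias–variance) identity around the weighted mean `c`. -/
lemma integral_norm_sub_sq_mul_eq_of_weighted_mean
    (hc : (∫ θ, w θ ∂ν) • c = ∫ θ, w θ • γ θ ∂ν) (a : F) :
    ∫ θ, ‖a - γ θ‖ ^ 2 * w θ ∂ν = ‖a - c‖ ^ 2 * ∫ θ, w θ ∂ν + ∫ θ, ‖c - γ θ‖ ^ 2 * w θ ∂ν := by
  have hwγc := integrable_smul_sub_of_integrable_smul hw hwγ c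
  have hbias : Integrable (fun θ => ‖a - c‖ ^ 2 * w θ) ν := hw.const_mul _
  have hcross_int : Integrable (fun θ => 2 * inner ℝ (a - c) (w θ • (c - γ θ))) ν :=
    (hwγc.const_inner _).const_mul 2
  have hsum : Integrable
      (fun θ => ‖a - c‖ ^ 2 * w θ + 2 * inner ℝ (a - c) (w θ • (c - γ θ))) ν :=
    hbias.add hcross_int
  have hcross : ∫ θ, 2 * inner ℝ (a - c) (w θ • (c - γ θ)) ∂ν = 0 := by
    rw [integral_const_mul, integral_inner hwγc,
      integral_smul_sub_eq_zero_of_weighted_mean hw hwγ hc, inner_zero_right, mul_zero]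
  rw [integral_congr_ae (.of_forall fun θ => norm_sub_sq_mul_eq a c (γ θ) (w θ)),
    integral_add hsum hvar, integral_add hbias hcross_int, hcross, add_zero,
    integral_const_mul]

lemma lintegral_ofReal_norm_sub_sq_mul_eq_of_weighted_mean (hw0 : ∀ θ, 0 ≤ w θ)
    (hc : (∫ θ, w θ ∂ν) • c = ∫ θ, w θ • γ θ ∂ν) (a : F) :
    ∫⁻ θ, ENNReal.ofReal (‖a - γ θ‖ ^ 2 * w θ) ∂ν =
      ENNReal.ofReal (‖a - c‖ ^ 2 * ∫ θ, w θ ∂ν) +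
        ∫⁻ θ, ENNReal.ofReal (‖c - γ θ‖ ^ 2 * w θ) ∂ν := by
  have hnonneg (b : F) : 0 ≤ᵐ[ν] fun θ => ‖b - γ θ‖ ^ 2 * w θ :=
    .of_forall fun θ => mul_nonneg (sq_nonneg _) (hw0 θ)
  rw [← ofReal_integral_eq_lintegral_ofReal (integrable_norm_sub_sq_mul hw hwγ hvar a)
      (hnonneg a), ← ofReal_integral_eq_lintegral_ofReal hvar (hnonneg c),
    integral_norm_sub_sq_mul_eq_of_weighted_mean hw hwγ hvar hc,
    ENNReal.ofReal_add (mul_nonneg (sq_nonneg _) (integral_nonneg hw0))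
      (integral_nonneg_of_ae (hnonneg c))]

end WeightedMean

section Uniqueness

variable {E : Type*} [MeasurableSpace E] {μ : Measure E} [SFinite μ]
  {Θ : Type*} [MeasurableSpace Θ] {ν : Measure Θ} [SFinite ν]
  {F : Type*} [NormedAddCommGroup F] [MeasurableSpace F] [BorelSpace F]
  [SecondCountableTopology F]

noncomputable def bayesRisk (μ : Measure E) (ν : Measure Θ) (w : E → Θ → ℝ) (γ : Θ → F)
    (g : E → F) : ENNReal :=
  ∫⁻ θ, ∫⁻ x, ENNReal.ofReal (‖g x - γ θ‖ ^ 2 * w x θ) ∂μ ∂ν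

lemma bayesRisk_eq_lintegral_swap {w : E → Θ → ℝ} (hw : Measurable (Function.uncurry w))
    {γ : Θ → F} (hγ : Measurable γ) {g : E → F} (hg : Measurable g) :
    bayesRisk μ ν w γ g = ∫⁻ x, ∫⁻ θ, ENNReal.ofReal (‖g x - γ θ‖ ^ 2 * w x θ) ∂ν ∂μ :=
  lintegral_lintegral_swap (Measurable.aemeasurable <| Measurable.ennreal_ofReal <|
    ((hg.comp measurable_snd).sub (hγ.comp measurable_fst)).norm.pow_const 2 |>.mul <|
      hw.comp measurable_swap)

lemma measurable_inv_integral_smul_integral [NormedSpace ℝ F] {w : E → Θ → ℝ}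
    (hw : Measurable (Function.uncurry w)) {γ : Θ → F} (hγ : Measurable γ) :
    Measurable fun x => (∫ θ, w x θ ∂ν)⁻¹ • ∫ θ, w x θ • γ θ ∂ν :=
  (hw.stronglyMeasurable.integral_prod_right').measurable.inv.smul
    (StronglyMeasurable.integral_prod_right' (f := fun p : E × Θ => w p.1 p.2 • γ p.2)
      (hw.smul (hγ.comp measurable_snd)).stronglyMeasurable).measurable

variable [InnerProductSpace ℝ F] [CompleteSpace F]

theorem ae_eq_of_bayesRisk_eq {w : E → Θ → ℝ} (hw : Measurable (Function.uncurry w))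
    (hw0 : ∀ x θ, 0 ≤ w x θ) (hw_pos : ∀ x, 0 < ∫ θ, w x θ ∂ν)
    (hw_int : ∀ x, Integrable (w x) ν) {γ : Θ → F} (hγ : Measurable γ)
    (hwγ_int : ∀ x, Integrable (fun θ => w x θ • γ θ) ν)
    {gt : E → F} (hgt : ∀ x, gt x = (∫ θ, w x θ ∂ν)⁻¹ • ∫ θ, w x θ • γ θ ∂ν)
    (hvar_int : ∀ x, Integrable (fun θ => ‖gt x - γ θ‖ ^ 2 * w x θ) ν)
    {g : E → F} (hg : Measurable g) (heq : bayesRisk μ ν w γ g = bayesRisk μ ν w γ gt)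
    (hfin : bayesRisk μ ν w γ gt ≠ ⊤) :
    g =ᵐ[μ] gt := by
  have hgt_meas : Measurable gt := by
    simpa only [← funext hgt] using measurable_inv_integral_smul_integral (ν := ν) hw hγ
  have hmean (x : E) : (∫ θ, w x θ ∂ν) • gt x = ∫ θ, w x θ • γ θ ∂ν := by
    rw [hgt, smul_inv_smul₀ (hw_pos x).ne']
  set excess : E → ENNReal := fun x => ENNReal.ofReal (‖g x - gt x‖ ^ 2 * ∫ θ, w x θ ∂ν)
  have hexcess : Measurable excess :=
    ((hg.sub hgt_meas).norm.pow_const 2 |>.mul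
      (hw.stronglyMeasurable.integral_prod_right').measurable).ennreal_ofReal
  have hrisk : bayesRisk μ ν w γ g = ∫⁻ x, excess x ∂μ + bayesRisk μ ν w γ gt := by
    rw [bayesRisk_eq_lintegral_swap hw hγ hg, bayesRisk_eq_lintegral_swap hw hγ hgt_meas,
      ← lintegral_add_left hexcess]
    exact lintegral_congr fun x => lintegral_ofReal_norm_sub_sq_mul_eq_of_weighted_mean
      (hw_int x) (hwγ_int x) (hvar_int x) (hw0 x) (hmean x) (g x)
  have hzero : ∫⁻ x, excess x ∂μ = 0 := by
    rw [← ENNReal.add_left_inj hfin, ← hrisk, heq, zero_add]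
  filter_upwards [(lintegral_eq_zero_iff hexcess).mp hzero] with x hx
  have hsq : ‖g x - gt x‖ ^ 2 = 0 := by
    simpa [excess, ENNReal.ofReal_eq_zero, (hw_pos x).not_ge] using hx
  simpa [sub_eq_zero] using hsq

end Uniqueness

/-- Essential uniqueness of the Bayes estimator: any measurable estimator `g` whose Bayesian
risk equals the (finite) Bayesian risk of the posterior-mean estimator `g̃_ε` agrees with
`g̃_ε` Lebesgue-almost everywhere on `E`. -/
theorem bayes_estimator_essentially_unique
    {E : Type*} [NormedAddCommGroup E] [InnerProductSpace ℝ E] [FiniteDimensional ℝ E]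
    [MeasurableSpace E] [BorelSpace E]
    {F : Type*} [NormedAddCommGroup F] [InnerProductSpace ℝ F] [FiniteDimensional ℝ F]
    [MeasurableSpace F] [BorelSpace F]
    {Θ : Type*} [TopologicalSpace Θ] [CompactSpace Θ] [MeasurableSpace Θ] [BorelSpace Θ]
    (ν : Measure Θ) [IsFiniteMeasure ν]
    (ι : Θ → E) (hι : Continuous ι)
    (γ : Θ → F) (hγ : Continuous γ)
    (l : Θ → ℝ) (hl : Continuous l) (hl0 : ∀ θ, 0 ≤ l θ) (hl1 : ∫ θ, l θ ∂ν = 1)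
    {ε : ℝ} (hε : 0 < ε)
    (gt : E → F)
    (hgt : ∀ x : E, gt x =
      (∫ θ, l θ * gaussKernel E ε (x - ι θ) ∂ν)⁻¹ •
        ∫ θ, (l θ * gaussKernel E ε (x - ι θ)) • γ θ ∂ν)
    (g : E → F) (hg : Measurable g)
    (heq : ∫⁻ θ, ∫⁻ x, ENNReal.ofReal (‖g x - γ θ‖ ^ 2 * l θ * gaussKernel E ε (x - ι θ))
              ∂volume ∂ν
            = ∫⁻ θ, ∫⁻ x, ENNReal.ofReal (‖gt x - γ θ‖ ^ 2 * l θ * gaussKernel E ε (x - ι θ))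
              ∂volume ∂ν)
    (hfin : ∫⁻ θ, ∫⁻ x, ENNReal.ofReal (‖gt x - γ θ‖ ^ 2 * l θ * gaussKernel E ε (x - ι θ))
              ∂volume ∂ν < ⊤) :
    ∀ᵐ x ∂(volume : Measure E), g x = gt x := by
  set w := posteriorWeight ι l ε
  have hw : Continuous (Function.uncurry w) := continuous_uncurry_posteriorWeight hι hl ε
  have hw_x (x : E) : Continuous (w x) := hw.comp (Continuous.prodMk_right x)
  have hrisk (f : E → F) : bayesRisk volume ν w γ f = ∫⁻ θ, ∫⁻ x,
      ENNReal.ofReal (‖f x - γ θ‖ ^ 2 * l θ * gaussKernel E ε (x - ι θ)) ∂volume ∂ν := by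
    simp only [bayesRisk, w, posteriorWeight, mul_assoc]
  refine ae_eq_of_bayesRisk_eq hw.measurable (posteriorWeight_nonneg hl0 ι hε.ne')
    (integral_posteriorWeight_pos hι hl hl0 hl1 hε.ne')
    (fun x => (hw_x x).integrable_of_compactSpace)
    hγ.measurable (fun x => ((hw_x x).smul hγ).integrable_of_compactSpace) hgt
    (fun x => ((continuous_const.sub hγ).norm.pow 2 |>.mul (hw_x x)).integrable_of_compactSpace)
    hg (by rw [hrisk, hrisk, heq]) (by rw [hrisk]; exact hfin.ne)
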